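/- arXiv:1209.5130 — 6 statements merged into one kernel-verified Lean document; each statement's English description precedes it below -/
import Mathlib

section
/- The spatial channel selection game is a weighted potential game: if a single user k changes its channel from a_k to a_k', keeping all other channels and all locations fixed, then Φ(d, a') − Φ(d, a) = −log(1−p_k)·(U_k(d, a') − U_k(d, a)), where Φ(d,a) = Σ_{i=1}^N −log(1−p_i)·( (1/2)·Σ_{j ∈ N_i^{a_i}(d,a)} log(1−p_j) + log(θ_{a_i} B_{a_i,d_i}^i p_i) ). -/
/-!
Writing `wᵢ = -log (1 - pᵢ)` and `cᵢ(m) = log (θₘ Bᵢₘ pᵢ)`, the potential is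
`-(1/2) ∑ᵢ ∑_{j ~ i, aⱼ = aᵢ} wᵢ wⱼ + ∑ᵢ wᵢ cᵢ(aᵢ)`. The double sum counts every co-channel
interfering pair twice, once from each end, because the interference graph is symmetric; so when
user `k` alone switches channel, it changes by twice the change of `wₖ ∑_{j ~ k, aⱼ = aₖ} wⱼ`, and
the factor `1/2` turns the change of the potential into `wₖ` times the change of `Uₖ`.
-/

open Finset

theorem sum_sum_neighbors_eq_two_nsmul_of_support_at {ι β : Type*} [Fintype ι] [DecidableEq ι]
    [AddCommMonoid β] (nbr : ι → Finset ι) (hsym : ∀ i j, i ∈ nbr j ↔ j ∈ nbr i)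
    (hirr : ∀ i, i ∉ nbr i) (D : ι → ι → β) (hD : ∀ i j, D i j = D j i) (k : ι)
    (hDk : ∀ i j, i ≠ k → j ≠ k → D i j = 0) :
    ∑ i, ∑ j ∈ nbr i, D i j = 2 • ∑ j ∈ nbr k, D k j := by
  have hne : ∀ i ∈ nbr k, i ≠ k := fun i hi h => hirr k (h ▸ hi)
  have hcol : ∑ i ∈ univ.erase k, ∑ j ∈ nbr i, D i j = ∑ i ∈ nbr k, D k i := by
    rw [← sum_subset (fun i hi => mem_erase.2 ⟨hne i hi, mem_univ i⟩)]
    · refine sum_congr rfl fun i hi => ?_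
      rw [sum_eq_single_of_mem k ((hsym k i).2 hi), hD]
      exact fun j _ hjk => hDk i j (hne i hi) hjk
    · intro i hi hik
      refine sum_eq_zero fun j hj => hDk i j (ne_of_mem_erase hi) ?_
      rintro rfl
      exact hik ((hsym i j).2 hj)
  rw [← add_sum_erase _ _ (mem_univ k), hcol, two_nsmul]

section SameChannel

variable {ι M : Type*} [Fintype ι] [DecidableEq M]
  (nbr : ι → Finset ι) (L : ι → ℝ) (c : ι → M → ℝ)

def sameChannelSum (a : ι → M) (i : ι) : ℝ :=
  ∑ j ∈ (nbr i).filter (fun j => a j = a i), L j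

/- With `L i = log (1 - p i)` and `c i m = log (θ m B i m p i)` these are the paper's `Φ` and `Uₖ`
at a fixed location profile `d`. -/
noncomputable def channelPotential (a : ι → M) : ℝ :=
  ∑ i, (-L i) * ((1 / 2) * sameChannelSum nbr L a i + c i (a i))

def channelUtility (a : ι → M) (k : ι) : ℝ :=
  c k (a k) + sameChannelSum nbr L a k

theorem sum_mul_sameChannelSum (a : ι → M) :
    ∑ i, L i * sameChannelSum nbr L a i =
      ∑ i, ∑ j ∈ nbr i, if a i = a j then L i * L j else 0 := by
  refine sum_congr rfl fun i _ => ?_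
  simp only [sameChannelSum, mul_sum, sum_filter, mul_ite, mul_zero, eq_comm]

theorem sum_mul_sameChannelSum_update_sub [DecidableEq ι] (hsym : ∀ i j, i ∈ nbr j ↔ j ∈ nbr i)
    (hirr : ∀ i, i ∉ nbr i) (a : ι → M) (k : ι) (x : M) :
    ∑ i, L i * sameChannelSum nbr L (Function.update a k x) i -
        ∑ i, L i * sameChannelSum nbr L a i =
      2 * (L k * (sameChannelSum nbr L (Function.update a k x) k - sameChannelSum nbr L a k)) := by
  set interaction : (ι → M) → ι → ι → ℝ := fun b i j => if b i = b j then L i * L j else 0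
  have hsymm : ∀ b i j, interaction b i j = interaction b j i := by
    intro b i j
    simp only [interaction, eq_comm, mul_comm]
  have hlocal : ∀ i j, i ≠ k → j ≠ k →
      interaction (Function.update a k x) i j - interaction a i j = 0 := by
    intro i j hi hj
    simp only [interaction, Function.update_of_ne hi, Function.update_of_ne hj, sub_self]
  rw [sum_mul_sameChannelSum, sum_mul_sameChannelSum, ← sum_sub_distrib]
  simp_rw [← sum_sub_distrib]
  rw [sum_sum_neighbors_eq_two_nsmul_of_support_at nbr hsym hirr _
      (fun i j => by simp only [hsymm _ i j]) k hlocal, nsmul_eq_mul, Nat.cast_ofNat]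
  congr 1
  rw [sameChannelSum, sameChannelSum, mul_sub, mul_sum, mul_sum, sum_filter, sum_filter,
    ← sum_sub_distrib]
  simp only [interaction, eq_comm]

theorem channelPotential_update_sub [DecidableEq ι] (hsym : ∀ i j, i ∈ nbr j ↔ j ∈ nbr i)
    (hirr : ∀ i, i ∉ nbr i) (a : ι → M) (k : ι) (x : M) :
    channelPotential nbr L c (Function.update a k x) - channelPotential nbr L c a =
      -L k * (channelUtility nbr L c (Function.update a k x) k - channelUtility nbr L c a k) := by
  have hlinear : ∑ i, L i * c i (Function.update a k x i) - ∑ i, L i * c i (a i) =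
      L k * (c k x - c k (a k)) := by
    rw [← sum_sub_distrib, sum_eq_single k, mul_sub, Function.update_self]
    · intro i _ hik
      rw [Function.update_of_ne hik, sub_self]
    · exact fun h => absurd (mem_univ k) h
  have hquadratic := sum_mul_sameChannelSum_update_sub nbr L hsym hirr a k x
  have hsplit : ∀ b : ι → M, channelPotential nbr L c b =
      -(1 / 2) * ∑ i, L i * sameChannelSum nbr L b i - ∑ i, L i * c i (b i) := by
    intro b
    simp only [channelPotential, mul_sum, ← sum_sub_distrib]
    exact sum_congr rfl fun i _ => by ring
  rw [hsplit, hsplit, channelUtility, channelUtility, Function.update_self]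
  linear_combination (-(1 / 2) : ℝ) * hquadratic - hlinear

end SameChannel

theorem spatial_channel_selection_weighted_potential_general
    {N M Δ : Type*} [Fintype N] [DecidableEq N] [DecidableEq M]
    (p : N → ℝ)
    (θ : M → ℝ)
    (B : N → M → Δ → ℝ)
    (Nb : (N → Δ) → N → Finset N)
    (hsym : ∀ d i j, i ∈ Nb d j ↔ j ∈ Nb d i)
    (hirr : ∀ d i, i ∉ Nb d i)
    (U : N → (N → Δ) → (N → M) → ℝ)
    (hU : ∀ n d a, U n d a =
      Real.log (θ (a n) * B n (a n) (d n) * p n) +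
        ∑ i ∈ (Nb d n).filter (fun i => a i = a n), Real.log (1 - p i))
    (Φ : (N → Δ) → (N → M) → ℝ)
    (hΦ : ∀ d a, Φ d a = ∑ i, (-Real.log (1 - p i)) *
      ((1 / 2) * ∑ j ∈ (Nb d i).filter (fun j => a j = a i), Real.log (1 - p j) +
        Real.log (θ (a i) * B i (a i) (d i) * p i)))
    (d : N → Δ) (a : N → M) (k : N) (ak' : M) :
    Φ d (Function.update a k ak') - Φ d a =
      (-Real.log (1 - p k)) * (U k d (Function.update a k ak') - U k d a) := by
  rw [hΦ, hΦ, hU, hU]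
  exact channelPotential_update_sub (Nb d) (fun i => Real.log (1 - p i))
    (fun i m => Real.log (θ m * B i m (d i) * p i)) (hsym d) (hirr d) a k ak'

/-- The spatial channel selection game is a weighted potential game. -/
theorem spatial_channel_selection_weighted_potential
    {N M Δ : Type*} [Fintype N] [DecidableEq N] [DecidableEq M]
    (p : N → ℝ) (hp : ∀ n, p n ∈ Set.Ioo (0 : ℝ) 1)
    (θ : M → ℝ) (hθ : ∀ m, θ m ∈ Set.Ioo (0 : ℝ) 1)
    (B : N → M → Δ → ℝ) (hB : ∀ n m d, 0 < B n m d)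
    (Nb : (N → Δ) → N → Finset N)
    (hsym : ∀ d i j, i ∈ Nb d j ↔ j ∈ Nb d i)
    (hirr : ∀ d i, i ∉ Nb d i)
    (U : N → (N → Δ) → (N → M) → ℝ)
    (hU : ∀ n d a, U n d a =
      Real.log (θ (a n) * B n (a n) (d n) * p n) +
        ∑ i ∈ (Nb d n).filter (fun i => a i = a n), Real.log (1 - p i))
    (Φ : (N → Δ) → (N → M) → ℝ)
    (hΦ : ∀ d a, Φ d a = ∑ i, (-Real.log (1 - p i)) *
      ((1 / 2) * ∑ j ∈ (Nb d i).filter (fun j => a j = a i), Real.log (1 - p j) +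
        Real.log (θ (a i) * B i (a i) (d i) * p i)))
    (d : N → Δ) (a : N → M) (k : N) (ak' : M) :
    Φ d (Function.update a k ak') - Φ d a =
      (-Real.log (1 - p k)) * (U k d (Function.update a k ak') - U k d a) :=
  spatial_channel_selection_weighted_potential_general p θ B Nb hsym hirr U hU Φ hΦ d a k ak'
end

section
/- Every weighted potential game with finitely many players and finite strategy sets has the finite improvement property: any sequence of asynchronous strict better-response updates (at each step exactly one player switches to a strategy strictly improving its own utility) is finite and terminates at a pure Nash equilibrium. -/
/-!
A strict better response of player `k` raises `U k`, hence raises the potential by `w k > 0` times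
as much. So the potential strictly increases along any improvement path, which therefore never
revisits a profile; as there are only finitely many profiles, the path is finite.
-/

open Function

theorem not_exists_seq_rel_succ_of_finite {α β : Type*} [Finite α] [Preorder β]
    {r : α → α → Prop} (f : α → β) (hf : ∀ a b, r a b → f a < f b) :
    ¬ ∃ seq : ℕ → α, ∀ t, r (seq t) (seq (t + 1)) := by
  rintro ⟨seq, hseq⟩
  have hmono : StrictMono (f ∘ seq) := strictMono_nat_of_lt_succ fun t => hf _ _ (hseq t)
  exact not_injective_infinite_finite seq hmono.injective.of_comp

section PotentialGame

variable {N : Type*} [DecidableEq N] {S : N → Type*}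

def IsImprovementStep (U : N → (∀ n, S n) → ℝ) (s s' : ∀ n, S n) : Prop :=
  ∃ (k : N) (x : S k), s' = update s k x ∧ U k s < U k s'

theorem IsImprovementStep.potential_lt {U : N → (∀ n, S n) → ℝ} {Φ : (∀ n, S n) → ℝ}
    {w : N → ℝ} (hw : ∀ n, 0 < w n)
    (hpot : ∀ (n : N) (s : ∀ n, S n) (s' : S n),
      Φ (update s n s') - Φ s = w n * (U n (update s n s') - U n s))
    {s s' : ∀ n, S n} (h : IsImprovementStep U s s') : Φ s < Φ s' := by
  obtain ⟨k, x, rfl, hlt⟩ := h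
  have hgain : 0 < Φ (update s k x) - Φ s := by
    rw [hpot]
    exact mul_pos (hw k) (sub_pos.mpr hlt)
  linarith

end PotentialGame

theorem finite_weighted_potential_game_FIP_general
    {N : Type*} [Fintype N] [DecidableEq N]
    (S : N → Type*) [∀ n, Fintype (S n)]
    (U : N → (∀ n, S n) → ℝ)
    (Φ : (∀ n, S n) → ℝ) (w : N → ℝ) (hw : ∀ n, 0 < w n)
    (hpot : ∀ (n : N) (s : ∀ n, S n) (s' : S n),
      Φ (Function.update s n s') - Φ s = w n * (U n (Function.update s n s') - U n s)) :
    (¬ ∃ seq : ℕ → (∀ n, S n), ∀ t : ℕ, ∃ (k : N) (x : S k),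
        seq (t + 1) = Function.update (seq t) k x ∧ U k (seq (t + 1)) > U k (seq t)) ∧
    (∀ s : ∀ n, S n,
      (¬ ∃ (k : N) (x : S k), U k (Function.update s k x) > U k s) →
      ∀ (n : N) (x : S n), U n (Function.update s n x) ≤ U n s) :=
  ⟨not_exists_seq_rel_succ_of_finite (r := IsImprovementStep U) Φ
      fun _ _ h => h.potential_lt hw hpot,
    fun _ hs n x => not_lt.mp fun hlt => hs ⟨n, x, hlt⟩⟩

/-- Every finite weighted potential game has the finite improvement
property: there is no infinite sequence of asynchronous strict better-response
updates, and any profile at which no player has a strict better response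
(i.e., where every improvement path terminates) is a pure Nash equilibrium. -/
theorem finite_weighted_potential_game_FIP
    {N : Type*} [Fintype N] [DecidableEq N]
    (S : N → Type*) [∀ n, Fintype (S n)] [∀ n, Nonempty (S n)]
    (U : N → (∀ n, S n) → ℝ)
    (Φ : (∀ n, S n) → ℝ) (w : N → ℝ) (hw : ∀ n, 0 < w n)
    (hpot : ∀ (n : N) (s : ∀ n, S n) (s' : S n),
      Φ (Function.update s n s') - Φ s = w n * (U n (Function.update s n s') - U n s)) :
    (¬ ∃ seq : ℕ → (∀ n, S n), ∀ t : ℕ, ∃ (k : N) (x : S k),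
        seq (t + 1) = Function.update (seq t) k x ∧ U k (seq (t + 1)) > U k (seq t)) ∧
    (∀ s : ∀ n, S n,
      (¬ ∃ (k : N) (x : S k), U k (Function.update s k x) > U k s) →
      ∀ (n : N) (x : S n), U n (Function.update s n x) ≤ U n s) :=
  finite_weighted_potential_game_FIP_general S U Φ w hw hpot
end

section
/- Every finite weighted potential game possesses at least one pure Nash equilibrium. -/
open Function

def IsPureNashEquilibrium {N : Type*} [DecidableEq N] {S : N → Type*}
    (U : N → (∀ n, S n) → ℝ) (s : ∀ n, S n) : Prop :=
  ∀ (n : N) (x : S n), U n (update s n x) ≤ U n s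

theorem isPureNashEquilibrium_of_forall_potential_le {N : Type*} [DecidableEq N]
    {S : N → Type*} {U : N → (∀ n, S n) → ℝ} {Φ : (∀ n, S n) → ℝ} {w : N → ℝ}
    (hw : ∀ n, 0 < w n)
    (hpot : ∀ (n : N) (s : ∀ n, S n) (s' : S n),
      Φ (update s n s') - Φ s = w n * (U n (update s n s') - U n s))
    {s : ∀ n, S n} (hs : ∀ t, Φ t ≤ Φ s) : IsPureNashEquilibrium U s := by
  intro n x
  have hΦ : w n * (U n (update s n x) - U n s) ≤ 0 := by
    rw [← hpot]
    exact sub_nonpos.mpr (hs _)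
  exact sub_nonpos.mp (nonpos_of_mul_nonpos_right hΦ (hw n))

/-- Every finite weighted potential game has a pure Nash equilibrium. -/
theorem finite_weighted_potential_game_has_nash
    {N : Type*} [Fintype N] [DecidableEq N]
    (S : N → Type*) [∀ n, Fintype (S n)] [∀ n, Nonempty (S n)]
    (U : N → (∀ n, S n) → ℝ)
    (Φ : (∀ n, S n) → ℝ) (w : N → ℝ) (hw : ∀ n, 0 < w n)
    (hpot : ∀ (n : N) (s : ∀ n, S n) (s' : S n),
      Φ (Function.update s n s') - Φ s = w n * (U n (Function.update s n s') - U n s)) :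
    ∃ s : ∀ n, S n, ∀ (n : N) (x : S n), U n (Function.update s n x) ≤ U n s := by
  obtain ⟨s, hs⟩ := Finite.exists_max Φ
  exact ⟨s, isPureNashEquilibrium_of_forall_potential_le hw hpot hs⟩
end

section
/- The strategic mobility game with fixed channel selections is a weighted potential game: if a single user k changes its location from d_k to d_k' (all other locations and all channel selections fixed), then Φ(d', a) − Φ(d, a) = −log(1−p_k)·(U_k(d', a) − U_k(d, a)), with Φ as in the spatial channel selection game. -/
/-!
With the channels fixed, the game is a pairwise-interaction game in the locations: user `i`
pays `log (1 - p j)` for every co-channel neighbour `j`, and the weighted interaction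
`-log (1 - p i) * log (1 - p j)` is symmetric in `i` and `j` because the neighbour relation is.
For such games `Φ = ∑ i, wᵢ (cᵢ + ½ ∑ⱼ gᵢⱼ)` is a weighted potential: when user `k` moves, the
terms `j → k` seen by the other users change by exactly as much as the terms `k → j` seen by `k`,
so the two halves add up to `w k` times the change of `U k`.
-/

open Finset Function

namespace PairwiseGame

variable {N α : Type*} [Fintype N] [DecidableEq N]

def utility (c : N → α → ℝ) (g : N → N → α → α → ℝ) (i : N) (x : N → α) : ℝ :=
  c i (x i) + ∑ j ∈ univ.erase i, g i j (x i) (x j)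

noncomputable def potential (w : N → ℝ) (c : N → α → ℝ) (g : N → N → α → α → ℝ) (x : N → α) : ℝ :=
  ∑ i, w i * (c i (x i) + (1 / 2) * ∑ j ∈ univ.erase i, g i j (x i) (x j))

omit [Fintype N] in
theorem sum_apply_update_sub {S : Finset N} {k : N} (hk : k ∈ S) (φ : N → α → ℝ)
    (x : N → α) (s : α) :
    ∑ j ∈ S, φ j (update x k s j) - ∑ j ∈ S, φ j (x j) = φ k s - φ k (x k) := by
  rw [← sum_sub_distrib, sum_eq_single_of_mem k hk]
  · simp
  · intro j _ hj
    simp [update_of_ne hj]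

theorem potential_update_sub (w : N → ℝ) (c : N → α → ℝ) (g : N → N → α → α → ℝ)
    (hg : ∀ i j s t, w i * g i j s t = w j * g j i t s) (x : N → α) (k : N) (s : α) :
    potential w c g (update x k s) - potential w c g x =
      w k * (utility c g k (update x k s) - utility c g k x) := by
  set D := ∑ j ∈ univ.erase k, (g k j s (x j) - g k j (x k) (x j))
  have hfixed : ∀ j ∈ univ.erase k, g k j s (update x k s j) = g k j s (x j) := fun j hj => by
    rw [update_of_ne (ne_of_mem_erase hj)]
  have hD : utility c g k (update x k s) - utility c g k x = c k s - c k (x k) + D := by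
    simp only [utility, update_self, sum_congr rfl hfixed, D, sum_sub_distrib]
    ring
  -- For `i ≠ k` only the term `j = k` of the inner sum moves, and symmetry turns it into `k → i`.
  have hother : ∀ i ∈ univ.erase k,
      w i * (c i (update x k s i) +
          (1 / 2) * ∑ j ∈ univ.erase i, g i j (update x k s i) (update x k s j)) -
        w i * (c i (x i) + (1 / 2) * ∑ j ∈ univ.erase i, g i j (x i) (x j)) =
      (1 / 2) * w k * (g k i s (x i) - g k i (x k) (x i)) := by
    intro i hi
    have hik := ne_of_mem_erase hi
    rw [update_of_ne hik]
    have hmove := sum_apply_update_sub (mem_erase.2 ⟨hik.symm, mem_univ k⟩)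
      (fun j t => g i j (x i) t) x s
    linear_combination (w i / 2) * hmove + (1 / 2) * hg i k (x i) s - (1 / 2) * hg i k (x i) (x k)
  have hself : w k * (c k (update x k s k) +
        (1 / 2) * ∑ j ∈ univ.erase k, g k j (update x k s k) (update x k s j)) -
      w k * (c k (x k) + (1 / 2) * ∑ j ∈ univ.erase k, g k j (x k) (x j)) =
      w k * (c k s - c k (x k)) + (1 / 2) * w k * D := by
    simp only [update_self, sum_congr rfl hfixed, D, sum_sub_distrib]
    ring
  rw [potential, potential, ← sum_sub_distrib, ← add_sum_erase _ _ (mem_univ k), hself,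
    sum_congr rfl hother, ← mul_sum, hD]
  ring

end PairwiseGame

open PairwiseGame

noncomputable def coChannelLoss {N M Δ : Type*} [DecidableEq M] [PseudoMetricSpace Δ] (δ : ℝ)
    (p : N → ℝ) (a : N → M) (i j : N) (s t : Δ) : ℝ :=
  if dist t s ≤ δ ∧ a j = a i then Real.log (1 - p j) else 0

theorem neg_log_mul_coChannelLoss_comm {N M Δ : Type*} [DecidableEq M] [PseudoMetricSpace Δ]
    (δ : ℝ) (p : N → ℝ) (a : N → M) (i j : N) (s t : Δ) :
    -Real.log (1 - p i) * coChannelLoss δ p a i j s t =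
      -Real.log (1 - p j) * coChannelLoss δ p a j i t s := by
  simp only [coChannelLoss, dist_comm t s, eq_comm (a := a j)]
  split_ifs <;> ring

theorem sum_filter_neighbors_eq {N M Δ : Type*} [Fintype N] [DecidableEq N] [DecidableEq M]
    [PseudoMetricSpace Δ] (δ : ℝ) (p : N → ℝ) (a : N → M) (d : N → Δ) (i : N) :
    ∑ j ∈ (univ.filter (fun j => j ≠ i ∧ dist (d j) (d i) ≤ δ)).filter (fun j => a j = a i),
        Real.log (1 - p j) =
      ∑ j ∈ univ.erase i, coChannelLoss δ p a i j (d i) (d j) := by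
  simp only [coChannelLoss, ← sum_filter, filter_filter]
  congr 1
  ext j
  simp [and_assoc]

theorem strategic_mobility_weighted_potential_general
    {N M Δ : Type*} [Fintype N] [DecidableEq N] [DecidableEq M]
    [PseudoMetricSpace Δ] (δ : ℝ)
    (p : N → ℝ)
    (θ : M → ℝ)
    (B : N → M → Δ → ℝ)
    (Nb : (N → Δ) → N → Finset N)
    (hNb : ∀ d n, Nb d n = univ.filter (fun i => i ≠ n ∧ dist (d i) (d n) ≤ δ))
    (U : N → (N → Δ) → (N → M) → ℝ)
    (hU : ∀ n d a, U n d a =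
      Real.log (θ (a n) * B n (a n) (d n) * p n) +
        ∑ i ∈ (Nb d n).filter (fun i => a i = a n), Real.log (1 - p i))
    (Φ : (N → Δ) → (N → M) → ℝ)
    (hΦ : ∀ d a, Φ d a = ∑ i, (-Real.log (1 - p i)) *
      ((1 / 2) * ∑ j ∈ (Nb d i).filter (fun j => a j = a i), Real.log (1 - p j) +
        Real.log (θ (a i) * B i (a i) (d i) * p i)))
    (d : N → Δ) (a : N → M) (k : N) (dk' : Δ) :
    Φ (Function.update d k dk') a - Φ d a =
      (-Real.log (1 - p k)) * (U k (Function.update d k dk') a - U k d a) := by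
  set c : N → Δ → ℝ := fun i t => Real.log (θ (a i) * B i (a i) t * p i)
  have hU' : ∀ e, U k e a = utility c (coChannelLoss δ p a) k e := fun e => by
    rw [hU, hNb, sum_filter_neighbors_eq, utility]
  have hΦ' : ∀ e, Φ e a = potential (fun i => -Real.log (1 - p i)) c (coChannelLoss δ p a) e :=
    fun e => by
      rw [hΦ, potential]
      refine sum_congr rfl fun i _ => ?_
      rw [hNb, sum_filter_neighbors_eq, add_comm]
  rw [hΦ', hΦ', hU', hU']
  exact potential_update_sub _ c _ (neg_log_mul_coChannelLoss_comm δ p a) d k dk'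

/-- The strategic mobility game with fixed channel selections is a
weighted potential game. Neighbors are determined by distance: `N_n(d) =
{ i ≠ n : dist (d i) (d n) ≤ δ }`. -/
theorem strategic_mobility_weighted_potential
    {N M Δ : Type*} [Fintype N] [DecidableEq N] [DecidableEq M]
    [PseudoMetricSpace Δ] [Fintype Δ] (δ : ℝ)
    (p : N → ℝ) (hp : ∀ n, p n ∈ Set.Ioo (0 : ℝ) 1)
    (θ : M → ℝ) (hθ : ∀ m, θ m ∈ Set.Ioo (0 : ℝ) 1)
    (B : N → M → Δ → ℝ) (hB : ∀ n m d, 0 < B n m d)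
    (Nb : (N → Δ) → N → Finset N)
    (hNb : ∀ d n, Nb d n = univ.filter (fun i => i ≠ n ∧ dist (d i) (d n) ≤ δ))
    (U : N → (N → Δ) → (N → M) → ℝ)
    (hU : ∀ n d a, U n d a =
      Real.log (θ (a n) * B n (a n) (d n) * p n) +
        ∑ i ∈ (Nb d n).filter (fun i => a i = a n), Real.log (1 - p i))
    (Φ : (N → Δ) → (N → M) → ℝ)
    (hΦ : ∀ d a, Φ d a = ∑ i, (-Real.log (1 - p i)) *
      ((1 / 2) * ∑ j ∈ (Nb d i).filter (fun j => a j = a i), Real.log (1 - p j) +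
        Real.log (θ (a i) * B i (a i) (d i) * p i)))
    (d : N → Δ) (a : N → M) (k : N) (dk' : Δ) :
    Φ (Function.update d k dk') a - Φ d a =
      (-Real.log (1 - p k)) * (U k (Function.update d k dk') a - U k d a) :=
  strategic_mobility_weighted_potential_general δ p θ B Nb hNb U hU Φ hΦ d a k dk'
end

section
/- The Gibbs distribution Pr(d) = e^{γΦ(d,a)}/Σ_{d̃ ∈ Θ} e^{γΦ(d̃,a)} satisfies the detailed balance equations Pr(d)·q_{d,d'} = Pr(d')·q_{d',d} for the distributed strategic mobility Markov chain, where for profiles d, d' differing only in the location of user n the transition rate is q_{d,d'} = τ_n · e^{w_n γ U_n(d',a)} / ( e^{w_n γ U_n(d,a)} + e^{w_n γ U_n(d',a)} ) with w_n = −log(1−p_n), and q_{d,d'} = 0 if d, d' differ in more than one coordinate. -/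
open Real Function

/-- The two denominators are the same sum, and the potential relation turns
`exp (γ φ) exp (w γ u')` into `exp (γ φ') exp (w γ u)`. -/
theorem exp_mul_logit_rate_symm {γ τ w φ φ' u u' : ℝ} (hpot : φ' - φ = w * (u' - u)) :
    exp (γ * φ) * (τ * exp (w * γ * u') / (exp (w * γ * u) + exp (w * γ * u'))) =
      exp (γ * φ') * (τ * exp (w * γ * u) / (exp (w * γ * u') + exp (w * γ * u))) := by
  have hexp : exp (γ * φ) * exp (w * γ * u') = exp (γ * φ') * exp (w * γ * u) := by
    rw [← exp_add, ← exp_add]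
    congr 1
    linear_combination -γ * hpot
  rw [add_comm (exp (w * γ * u')), mul_div_assoc', mul_div_assoc', mul_left_comm,
    mul_left_comm (exp (γ * φ')), hexp]

theorem Function.eq_update_update_self {ι : Type*} {β : ι → Type*} [DecidableEq ι]
    (f : ∀ i, β i) (i : ι) (b : β i) : f = update (update f i b) i (f i) := by
  rw [update_idem, update_eq_self]

theorem Function.exists_update_eq_comm {ι : Type*} {β : ι → Type*} [DecidableEq ι]
    (f g : ∀ i, β i) : (∃ i b, g = update f i b) ↔ ∃ i b, f = update g i b := by
  constructor <;> rintro ⟨i, b, rfl⟩ <;> exact ⟨i, _, eq_update_update_self _ i b⟩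

theorem strategic_mobility_detailed_balance_general
    {N Δ : Type*} [Fintype N] [DecidableEq N] [Fintype Δ]
    (γ : ℝ)
    (τ : N → ℝ)
    (w : N → ℝ)
    (U : N → (N → Δ) → ℝ)
    (Φ : (N → Δ) → ℝ)
    (hpot : ∀ (d : N → Δ) (n : N) (l : Δ),
      Φ (Function.update d n l) - Φ d = w n * (U n (Function.update d n l) - U n d))
    (Pr : (N → Δ) → ℝ)
    (hPr : ∀ d, Pr d = Real.exp (γ * Φ d) / ∑ d' : N → Δ, Real.exp (γ * Φ d'))
    (q : (N → Δ) → (N → Δ) → ℝ)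
    (hq : ∀ (d : N → Δ) (n : N) (l : Δ), l ≠ d n →
      q d (Function.update d n l) =
        τ n * Real.exp (w n * γ * U n (Function.update d n l)) /
          (Real.exp (w n * γ * U n d) + Real.exp (w n * γ * U n (Function.update d n l))))
    (hq0 : ∀ d d' : N → Δ, d ≠ d' →
      (¬ ∃ (n : N) (l : Δ), d' = Function.update d n l) → q d d' = 0) :
    ∀ d d' : N → Δ, d ≠ d' → Pr d * q d d' = Pr d' * q d' d := by
  intro d d' hne
  simp only [hPr, div_mul_eq_mul_div]
  congr 1
  by_cases hadj : ∃ n l, d' = update d n l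
  · obtain ⟨n, l, rfl⟩ := hadj
    have hl : l ≠ d n := fun h => hne (by rw [h, update_eq_self])
    have hback := hq (update d n l) n (d n) (by rwa [update_self, ne_comm])
    rw [← eq_update_update_self] at hback
    rw [hq d n l hl, hback]
    exact exp_mul_logit_rate_symm (hpot d n l)
  · have hadj' : ¬ ∃ n l, d = update d' n l := by rwa [← exists_update_eq_comm]
    rw [hq0 d d' hne hadj, hq0 d' d hne.symm hadj', mul_zero, mul_zero]

/-- The Gibbs distribution over location profiles satisfies the
detailed balance equations for the distributed strategic mobility Markov chain. -/
theorem strategic_mobility_detailed_balance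
    {N Δ : Type*} [Fintype N] [DecidableEq N] [Fintype Δ] [DecidableEq Δ]
    (γ : ℝ) (hγ : 0 < γ)
    (τ : N → ℝ) (hτ : ∀ n, 0 < τ n)
    (w : N → ℝ) (hw : ∀ n, 0 < w n)
    (U : N → (N → Δ) → ℝ)
    (Φ : (N → Δ) → ℝ)
    (hpot : ∀ (d : N → Δ) (n : N) (l : Δ),
      Φ (Function.update d n l) - Φ d = w n * (U n (Function.update d n l) - U n d))
    (Pr : (N → Δ) → ℝ)
    (hPr : ∀ d, Pr d = Real.exp (γ * Φ d) / ∑ d' : N → Δ, Real.exp (γ * Φ d'))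
    (q : (N → Δ) → (N → Δ) → ℝ)
    (hq : ∀ (d : N → Δ) (n : N) (l : Δ), l ≠ d n →
      q d (Function.update d n l) =
        τ n * Real.exp (w n * γ * U n (Function.update d n l)) /
          (Real.exp (w n * γ * U n d) + Real.exp (w n * γ * U n (Function.update d n l))))
    (hq0 : ∀ d d' : N → Δ, d ≠ d' →
      (¬ ∃ (n : N) (l : Δ), d' = Function.update d n l) → q d d' = 0) :
    ∀ d d' : N → Δ, d ≠ d' → Pr d * q d d' = Pr d' * q d' d :=
  strategic_mobility_detailed_balance_general γ τ w U Φ hpot Pr hPr q hq hq0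
end

section
/- Suppose for every user n there exist functions L_i^n and V_i^n on mixed-strategy profiles and a weight w_n > 0 with L_i^n(σ) − L_j^n(σ) = w_n·(V_i^n(σ) − V_j^n(σ)) for all channels i,j, and L(σ) = Σ_i σ_i^n L_i^n(σ) for each n (as a function of user n's strategy with others fixed). Then along the replicator dynamics dσ_m^n/dT = σ_m^n(V_m^n(σ) − Σ_i σ_i^n V_i^n(σ)), the directional derivative of L in user n's coordinates equals (w_n/2)·Σ_{i,j} σ_i^n σ_j^n (V_i^n(σ) − V_j^n(σ))², which is nonnegative. -/
open Finset

/-!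
The replicator drift `σ_j ∑_i σ_i (V_j - V_i)` is an antisymmetric pair sum, so pairing it
with `L` only sees the differences `L_j - L_i`; these are `w (V_j - V_i)`, which turns the
pairing into a weighted sum of squares.
-/

section Symmetrize

variable {ι R : Type*} [CommRing R] (s : Finset ι)

theorem sum_sum_mul_sub_eq_two_mul_of_antisymm (a : ι → ι → R)
    (ha : ∀ i j, a i j = -a j i) (x : ι → R) :
    ∑ j ∈ s, ∑ i ∈ s, a j i * (x j - x i) = 2 * ∑ j ∈ s, ∑ i ∈ s, a j i * x j := by
  have swap : ∑ j ∈ s, ∑ i ∈ s, a j i * x i = -∑ j ∈ s, ∑ i ∈ s, a j i * x j := by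
    rw [sum_comm, ← sum_neg_distrib]
    refine sum_congr rfl fun j _ => ?_
    rw [← sum_neg_distrib]
    exact sum_congr rfl fun i _ => by rw [ha]; ring
  simp only [mul_sub, sum_sub_distrib, swap]
  ring

theorem sum_mul_mul_sum_eq_sum_sum (σ V L : ι → R) :
    ∑ j ∈ s, L j * (σ j * ∑ i ∈ s, σ i * (V j - V i)) =
      ∑ j ∈ s, ∑ i ∈ s, σ j * σ i * (V j - V i) * L j := by
  refine sum_congr rfl fun j _ => ?_
  rw [mul_sum, mul_sum]
  exact sum_congr rfl fun i _ => by ring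

end Symmetrize

theorem replicator_potential_derivative_nonneg_general
    {M : Type*} [Fintype M]
    (σn : M → ℝ) (hσn : ∀ m, 0 ≤ σn m)
    (L V : M → ℝ) (w : ℝ) (hw : 0 < w)
    (hLV : ∀ i j : M, L i - L j = w * (V i - V j)) :
    (∑ j : M, L j * (σn j * ∑ i : M, σn i * (V j - V i)) =
      (1 / 2) * ∑ j : M, ∑ i : M, σn j * σn i * (V j - V i) * (L j - L i)) ∧
    (∑ j : M, L j * (σn j * ∑ i : M, σn i * (V j - V i)) =
      (w / 2) * ∑ j : M, ∑ i : M, σn j * σn i * (V j - V i) ^ 2) ∧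
    0 ≤ ∑ j : M, L j * (σn j * ∑ i : M, σn i * (V j - V i)) := by
  have pairing : ∑ j : M, L j * (σn j * ∑ i : M, σn i * (V j - V i)) =
      (1 / 2) * ∑ j : M, ∑ i : M, σn j * σn i * (V j - V i) * (L j - L i) := by
    rw [sum_sum_mul_sub_eq_two_mul_of_antisymm _ (fun j i => σn j * σn i * (V j - V i))
      (fun i j => by ring), sum_mul_mul_sum_eq_sum_sum]
    ring
  have squares : ∑ j : M, ∑ i : M, σn j * σn i * (V j - V i) * (L j - L i) =
      w * ∑ j : M, ∑ i : M, σn j * σn i * (V j - V i) ^ 2 := by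
    simp only [mul_sum, hLV]
    exact sum_congr rfl fun j _ => sum_congr rfl fun i _ => by ring
  have weighted : ∑ j : M, L j * (σn j * ∑ i : M, σn i * (V j - V i)) =
      (w / 2) * ∑ j : M, ∑ i : M, σn j * σn i * (V j - V i) ^ 2 := by
    rw [pairing, squares]
    ring
  refine ⟨pairing, weighted, weighted ▸ mul_nonneg (by positivity) ?_⟩
  exact sum_nonneg fun j _ => sum_nonneg fun i _ =>
    mul_nonneg (mul_nonneg (hσn j) (hσn i)) (sq_nonneg _)

/-- Along the replicator dynamics, the directional derivative of
the expected potential L in user n's coordinates equals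
(w_n/2)·Σ_{i,j} σ_i σ_j (V_i − V_j)², which is nonnegative.
Here, for a fixed mixed-strategy profile σ, the values L_j^n(σ) and V_j^n(σ) are
treated as fixed real numbers L j and V j for user n, with σn user n's mixed
strategy. -/
theorem replicator_potential_derivative_nonneg
    {M : Type*} [Fintype M]
    (σn : M → ℝ) (hσn : ∀ m, 0 ≤ σn m) (hsum : ∑ m : M, σn m = 1)
    (L V : M → ℝ) (w : ℝ) (hw : 0 < w)
    (hLV : ∀ i j : M, L i - L j = w * (V i - V j)) :
    (∑ j : M, L j * (σn j * ∑ i : M, σn i * (V j - V i)) =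
      (1 / 2) * ∑ j : M, ∑ i : M, σn j * σn i * (V j - V i) * (L j - L i)) ∧
    (∑ j : M, L j * (σn j * ∑ i : M, σn i * (V j - V i)) =
      (w / 2) * ∑ j : M, ∑ i : M, σn j * σn i * (V j - V i) ^ 2) ∧
    0 ≤ ∑ j : M, L j * (σn j * ∑ i : M, σn i * (V j - V i)) :=
  replicator_potential_derivative_nonneg_general σn hσn L V w hw hLV
end
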